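/- arXiv:1803.08462 — 5 statements merged into one kernel-verified Lean document; each statement's English description precedes it below -/
import Mathlib

section
/- If a 3-uniform multihypergraph H with m edges has a 2-cut of size (3/4)·m + x, then H has a 3-cut (partition into three parts) in which the number of edges with exactly one vertex in each part is at least (6/27)·m + (2/27)·x. -/
/-!
Refine the given 2-cut `ω` by moving every vertex, independently with probability 1/3, to a new
third part. An edge meeting both sides of `ω` becomes rainbow in 8 of the 27 equally likely
local outcomes, so some refinement has a 3-cut of size at least `8/27 · (3/4 · m + x)`, which is
enough when `x ≥ 0`. When `x < 0`, a uniformly random 3-colouring is better: each edge is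
rainbow in 6 of 27 outcomes, giving `6/27 · m`.
-/

open scoped Classical
open Finset

theorem card_filter_comp_embedding_mul {ι V α : Type*} [Fintype ι] [DecidableEq ι] [Fintype V]
    [DecidableEq V] [Fintype α] (ψ : ι ↪ V) (P : (ι → α) → Prop) [DecidablePred P] :
    #{g : V → α | P (g ∘ ψ)} * Fintype.card (ι → α)
      = #{f : ι → α | P f} * Fintype.card (V → α) := by
  let split : (V → α) ≃ (ι → α) × ({v // v ∉ Set.range ψ} → α) :=
    (Equiv.piEquivPiSubtypeProd (· ∈ Set.range ψ) _).trans
      (Equiv.prodCongr (Equiv.arrowCongr (Equiv.ofInjective ψ ψ.injective).symm (Equiv.refl α))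
        (Equiv.refl _))
  have hcard : #{g : V → α | P (g ∘ ψ)}
      = #{f : ι → α | P f} * Fintype.card α ^ Fintype.card {v // v ∉ Set.range ψ} := by
    rw [← Fintype.card_subtype, ← Fintype.card_subtype, ← Fintype.card_fun, ← Fintype.card_prod]
    exact Fintype.card_congr ((split.subtypeEquiv fun g => Iff.rfl).trans
      Equiv.prodSubtypeFstEquivSubtypeProd)
  have hV : Fintype.card {v // v ∉ Set.range ψ} + Fintype.card ι = Fintype.card V := by
    rw [Fintype.card_subtype_compl, Fintype.card_range]
    have := Fintype.card_le_of_embedding ψ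
    omega
  rw [hcard, Fintype.card_fun, Fintype.card_fun, mul_assoc, ← pow_add, hV]

theorem Finset.exists_embedding_fin_of_card_eq {V : Type*} {e : Finset V} {k : ℕ} (he : #e = k) :
    ∃ ψ : Fin k ↪ V, ∀ v, v ∈ e ↔ ∃ j, ψ j = v := by
  let φ : e ≃ Fin k := Fintype.equivFinOfCardEq (by rw [Fintype.card_coe, he])
  refine ⟨φ.symm.toEmbedding.trans (Function.Embedding.subtype _), fun v => ⟨fun hv => ?_, ?_⟩⟩
  · exact ⟨φ ⟨v, hv⟩, by simp⟩
  · rintro ⟨j, rfl⟩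
    exact (φ.symm j).2

theorem Multiset.exists_mul_countP_le_countP {ι β : Type*} [Fintype ι] [Nonempty ι]
    (H : Multiset β) (p : β → Prop) [DecidablePred p] (q : ι → β → Prop)
    [∀ i, DecidablePred (q i)] {r : ℚ} (h : ∀ e ∈ H, p e → r * Fintype.card ι ≤ #{i | q i e}) :
    ∃ i, r * H.countP p ≤ H.countP (q i) := by
  have hsum : ∑ _i : ι, r * H.countP p ≤ ∑ i, (H.countP (q i) : ℚ) := by
    rw [sum_const, card_univ, nsmul_eq_mul]
    induction H using Multiset.induction_on with
    | empty => simp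
    | cons e H ih =>
      simp only [Multiset.countP_cons, Nat.cast_add, Nat.cast_ite, Nat.cast_one, Nat.cast_zero,
        sum_add_distrib, mul_add]
      refine add_le_add (ih fun e' he' => h e' (Multiset.mem_cons_of_mem he')) ?_
      split_ifs with he
      · rw [mul_one, mul_comm, ← natCast_card_filter]
        exact h e (Multiset.mem_cons_self e H) he
      · simp
  obtain ⟨i, -, hi⟩ := exists_le_of_sum_le univ_nonempty hsum
  exact ⟨i, hi⟩

section Rainbow

variable {V : Type*}

def IsRainbow (σ : V → Fin 3) (e : Finset V) : Prop := ∀ i, ∃ v ∈ e, σ v = i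

instance (σ : V → Fin 3) (e : Finset V) : Decidable (IsRainbow σ e) :=
  inferInstanceAs (Decidable (∀ i, ∃ v ∈ e, σ v = i))

-- For uniform `g`, each vertex moves to the new part `2` independently with probability 1/3.
def refineCut (ω : V → Fin 2) (g : V → Fin 3) (v : V) : Fin 3 :=
  if g v = 0 then 2 else (ω v).castSucc

theorem card_isRainbow_fin_three : #{f : Fin 3 → Fin 3 | IsRainbow f univ} = 6 := by
  decide

theorem le_card_isRainbow_refineCut_fin_three (c : Fin 3 → Fin 2) (hc : ∃ j k, c j ≠ c k) :
    8 ≤ #{f : Fin 3 → Fin 3 | IsRainbow (refineCut c f) univ} := by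
  revert c
  decide

theorem isRainbow_iff_comp {e : Finset V} {k : ℕ} {ψ : Fin k ↪ V}
    (hψ : ∀ v, v ∈ e ↔ ∃ j, ψ j = v) (σ : V → Fin 3) :
    IsRainbow σ e ↔ IsRainbow (σ ∘ ψ) univ := by
  simp only [IsRainbow, hψ, exists_exists_eq_and, mem_univ, true_and, Function.comp_apply]

variable [Fintype V] [DecidableEq V]

theorem le_card_isRainbow {e : Finset V} (he : #e = 3) :
    (6 / 27 : ℚ) * Fintype.card (V → Fin 3) ≤ #{g : V → Fin 3 | IsRainbow g e} := by
  obtain ⟨ψ, hψ⟩ := exists_embedding_fin_of_card_eq he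
  have h := card_filter_comp_embedding_mul ψ (IsRainbow · univ)
  rw [card_isRainbow_fin_three, show Fintype.card (Fin 3 → Fin 3) = 27 from rfl] at h
  rw [filter_congr fun g _ => isRainbow_iff_comp hψ g]
  qify at h
  linarith

theorem le_card_isRainbow_refineCut (ω : V → Fin 2) {e : Finset V} (he : #e = 3)
    (hcut : ∃ u ∈ e, ∃ v ∈ e, ω u ≠ ω v) :
    (8 / 27 : ℚ) * Fintype.card (V → Fin 3) ≤ #{g : V → Fin 3 | IsRainbow (refineCut ω g) e} := by
  obtain ⟨ψ, hψ⟩ := exists_embedding_fin_of_card_eq he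
  have hc : ∃ j k, (ω ∘ ψ) j ≠ (ω ∘ ψ) k := by
    obtain ⟨u, hu, v, hv, huv⟩ := hcut
    obtain ⟨j, rfl⟩ := (hψ u).1 hu
    obtain ⟨k, rfl⟩ := (hψ v).1 hv
    exact ⟨j, k, huv⟩
  have h8 := le_card_isRainbow_refineCut_fin_three _ hc
  have h := card_filter_comp_embedding_mul ψ fun f => IsRainbow (refineCut (ω ∘ ψ) f) univ
  rw [show Fintype.card (Fin 3 → Fin 3) = 27 from rfl] at h
  have hrestrict (g : V → Fin 3) :
      IsRainbow (refineCut ω g) e ↔ IsRainbow (refineCut (ω ∘ ψ) (g ∘ ψ)) univ :=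
    isRainbow_iff_comp hψ _
  rw [filter_congr fun g _ => hrestrict g]
  qify at h h8
  nlinarith

end Rainbow

theorem stmt_4_general {V : Type*} [Fintype V]
    (H : Multiset (Finset V)) (h3 : ∀ e ∈ H, e.card = 3)
    (x : ℚ) (ω : V → Fin 2)
    (hcut : (H.countP (fun e => ∃ u ∈ e, ∃ v ∈ e, ω u ≠ ω v) : ℚ)
      = 3 / 4 * H.card + x) :
    ∃ σ : V → Fin 3,
      (H.countP (fun e => ∀ i : Fin 3, ∃ v ∈ e, σ v = i) : ℚ)
        ≥ 6 / 27 * H.card + 2 / 27 * x := by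
  by_cases hx : 0 ≤ x
  · obtain ⟨g, hg⟩ := H.exists_mul_countP_le_countP _ (fun g => IsRainbow (refineCut ω g))
      fun e he hcut => le_card_isRainbow_refineCut ω (h3 e he) hcut
    exact ⟨refineCut ω g, le_trans (by linarith) hg⟩
  · obtain ⟨g, hg⟩ := H.exists_mul_countP_le_countP (fun _ => True) IsRainbow
      fun e he _ => le_card_isRainbow (h3 e he)
    rw [Multiset.countP_True] at hg
    exact ⟨g, le_trans (by linarith) hg⟩

/-- If a 3-uniform multihypergraph with m edges has a 2-cut of size (3/4)m + x,
then it has a 3-cut of size at least (6/27)m + (2/27)x. -/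
theorem stmt_4 {V : Type*} [Fintype V] [DecidableEq V]
    (H : Multiset (Finset V)) (h3 : ∀ e ∈ H, e.card = 3)
    (x : ℚ) (ω : V → Fin 2)
    (hcut : (H.countP (fun e => ∃ u ∈ e, ∃ v ∈ e, ω u ≠ ω v) : ℚ)
      = 3 / 4 * H.card + x) :
    ∃ σ : V → Fin 3,
      (H.countP (fun e => ∀ i : Fin 3, ∃ v ∈ e, σ v = i) : ℚ)
        ≥ 6 / 27 * H.card + 2 / 27 * x :=
  stmt_4_general H h3 x ω hcut
end

section
/- Let H be a multihypergraph and V' a subset of its vertices such that every edge intersects V' in at most two vertices. Define a weighted graph R on V' where the weight between u,v ∈ V' is η_{u,v} = Σ_e 2^{2−|e|}, summed over edges e of H intersecting V' in exactly {u,v}. Then for any assignment ω: V' → {1,2}, the excess of ω as a cut of R (weight of cut edges minus expected weight under a uniformly random cut) equals the average excess of ω as a V'-partial 2-cut of H. -/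
/-!
Both sides are sums over the edges of `H`, so it suffices to compare the contributions of a
single edge `e`. Under a uniformly random extension of `ω`, the edge `e` is uncut iff it is
monochromatic, and it has colour `c` with probability `2 ^ (-|e \ V'|)` if `ω` is constantly `c`
on `e ∩ V'`, and probability `0` otherwise. Hence `e` contributes `(2 - 2 ^ |e ∩ V'| * m) / 2 ^ |e|`
to the average excess, where `m` is the number of colours that are constant on `e ∩ V'`. This
vanishes when `|e ∩ V'| ≤ 1`, and when `e ∩ V' = {a, b}` it is `± 2 ^ (1 - |e|)`, with sign `+`
exactly when `ω a ≠ ω b`: the contribution of `e` to the excess of `R` through `η a b`.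
-/

open Finset

theorem Multiset.sum_map_filter_eq_sum_map_ite {ι M : Type*} [AddCommMonoid M] (m : Multiset ι)
    (p : ι → Prop) [DecidablePred p] (f : ι → M) :
    ((m.filter p).map f).sum = (m.map fun a => if p a then f a else 0).sum := by
  induction m using Multiset.induction_on with
  | empty => simp
  | cons a m ih => by_cases h : p a <;> simp [h, ih]

theorem Finset.sum_countP_eq_sum_map_card_filter {ι κ : Type*} (S : Finset ι) (m : Multiset κ)
    (P : ι → κ → Prop) [∀ i k, Decidable (P i k)] :
    ∑ i ∈ S, m.countP (P i) = (m.map fun k => #{i ∈ S | P i k}).sum := by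
  induction m using Multiset.induction_on with
  | empty => simp
  | cons a m ih => simp [Multiset.countP_cons, sum_add_distrib, ih, add_comm]

section

variable {V β : Type*} [DecidableEq V] [DecidableEq β]

theorem graph_cut_excess_eq_sum_map {H : Multiset (Finset V)} {V' : Finset V} {η : V → V → ℚ}
    (hη : ∀ u v, u ≠ v → η u v =
      ((H.filter (fun e => e ∩ V' = {u, v})).map (fun e => (4 : ℚ) / 2 ^ e.card)).sum)
    (ω : V → β) :
    (1 / 2 : ℚ) * ∑ u ∈ V', ∑ v ∈ V', (if u ≠ v ∧ ω u ≠ ω v then η u v else 0)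
      - (1 / 2) * ((1 / 2) * ∑ u ∈ V', ∑ v ∈ V', (if u ≠ v then η u v else 0))
    = (H.map fun e => (∑ u ∈ V', ∑ v ∈ V',
        if u ≠ v ∧ e ∩ V' = {u, v} then (if ω u = ω v then -1 else 1 : ℚ) else 0)
          / 2 ^ #e).sum := by
  simp only [sum_div, Multiset.sum_map_sum, mul_sum, ← sum_sub_distrib]
  refine sum_congr rfl fun u _ => sum_congr rfl fun v _ => ?_
  by_cases huv : u = v
  · simp [huv]
  rw [hη u v huv, Multiset.sum_map_filter_eq_sum_map_ite]
  have hterm (e : Finset V) :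
      (if u ≠ v ∧ e ∩ V' = {u, v} then (if ω u = ω v then -1 else 1 : ℚ) else 0) / 2 ^ #e
        = (if ω u = ω v then -1 else 1) / 4 * (if e ∩ V' = {u, v} then 4 / 2 ^ #e else 0) := by
    split_ifs <;> simp_all <;> ring
  simp only [hterm, Multiset.sum_map_mul_left]
  split_ifs <;> simp_all <;> ring

variable [Fintype V] [Fintype β]

theorem sum_sum_ite_pair_sign_eq {V' s : Finset V} (hs : s ⊆ V') (hcard : #s ≤ 2)
    (ω : V → Fin 2) :
    ∑ u ∈ V', ∑ v ∈ V', (if u ≠ v ∧ s = {u, v} then (if ω u = ω v then -1 else 1 : ℚ) else 0)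
      = 2 - 2 ^ #s * #{c | ∀ v ∈ s, ω v = c} := by
  rcases (by omega : #s ≤ 1 ∨ #s = 2) with h | h
  · have hpair : ∀ u v : V, ¬(u ≠ v ∧ s = {u, v}) := by
      rintro u v ⟨huv, rfl⟩
      rw [card_pair huv] at h
      omega
    rw [sum_eq_zero fun u _ => sum_eq_zero fun v _ => if_neg (hpair u v)]
    obtain h | h := Nat.le_one_iff_eq_zero_or_eq_one.mp h
    · rw [card_eq_zero.mp h]
      norm_num
    · obtain ⟨a, rfl⟩ := card_eq_one.mp h
      norm_num [filter_eq]
  · obtain ⟨a, b, hab, rfl⟩ := card_eq_two.mp h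
    have ha : a ∈ V' := hs (by simp)
    have hb : b ∈ V' := hs (by simp)
    have hpair (u v : V) : ({a, b} : Finset V) = {u, v} ↔ u = a ∧ v = b ∨ u = b ∧ v = a := by
      rw [← coe_inj, coe_pair, coe_pair, Set.pair_eq_pair_iff]
      grind
    have hterm (u v : V) :
        (if u ≠ v ∧ ({a, b} : Finset V) = {u, v} then (if ω u = ω v then -1 else 1 : ℚ) else 0)
          = (if u = a ∧ v = b then (if ω a = ω b then -1 else 1) else 0)
            + (if u = b ∧ v = a then (if ω b = ω a then -1 else 1) else 0) := by
      simp only [hpair]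
      grind
    simp only [hterm, sum_add_distrib, ite_and]
    by_cases hω : ω a = ω b
    · simp [hω, ha, hb, h, filter_eq]
      norm_num
    · have hno_colour : ∀ c, ¬(ω a = c ∧ ω b = c) := fun c hc => hω (hc.1.trans hc.2.symm)
      simp [hω, Ne.symm hω, ha, hb, hno_colour]
      norm_num

def extensions (V' : Finset V) (ω : V → β) : Finset (V → β) := {τ | ∀ v ∈ V', τ v = ω v}

theorem extensions_eq_piFinset (V' : Finset V) (ω : V → β) :
    extensions V' ω = Fintype.piFinset fun v => if v ∈ V' then {ω v} else univ := by
  ext τ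
  simp only [extensions, mem_filter, mem_univ, true_and, Fintype.mem_piFinset]
  refine forall_congr' fun v => ?_
  split_ifs with hv <;> simp [hv]

theorem card_extensions (V' : Finset V) (ω : V → β) :
    #(extensions V' ω) = Fintype.card β ^ #(univ \ V') := by
  rw [extensions_eq_piFinset, Fintype.card_piFinset]
  simp only [apply_ite card, card_singleton, card_univ, prod_ite, prod_const_one, prod_const,
    one_mul]
  congr 2
  ext v
  simp

theorem card_filter_const_on_extensions (V' e : Finset V) (ω : V → β) (c : β) :
    #{τ ∈ extensions V' ω | ∀ a ∈ e, τ a = c}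
      = if ∀ v ∈ e ∩ V', ω v = c then Fintype.card β ^ #(univ \ (V' ∪ e)) else 0 := by
  split_ifs with h
  · rw [← card_extensions (V' ∪ e) (fun v => if v ∈ V' then ω v else c)]
    congr 1
    ext τ
    simp only [extensions, mem_filter, mem_univ, true_and, mem_union]
    grind
  · push Not at h
    obtain ⟨v, hv, hvc⟩ := h
    rw [card_eq_zero, filter_eq_empty_iff]
    intro τ hτ hc
    simp only [extensions, mem_filter, mem_univ, true_and] at hτ
    exact hvc ((hτ v (mem_inter.1 hv).2).symm.trans (hc v (mem_inter.1 hv).1))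

theorem card_filter_monochromatic_eq_sum {S : Finset (V → β)} {e : Finset V} (he : e.Nonempty) :
    #{τ ∈ S | ¬∃ a ∈ e, ∃ b ∈ e, τ a ≠ τ b} = ∑ c, #{τ ∈ S | ∀ a ∈ e, τ a = c} := by
  obtain ⟨x, hx⟩ := he
  rw [card_eq_sum_card_fiberwise (f := fun τ => τ x) (t := univ) (fun _ _ => mem_univ _)]
  refine sum_congr rfl fun c _ => ?_
  rw [filter_filter]
  congr 1
  refine filter_congr fun τ _ => ?_
  push Not
  grind

theorem card_filter_monochromatic_extensions (V' : Finset V) (ω : V → β) {e : Finset V}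
    (he : e.Nonempty) :
    #{τ ∈ extensions V' ω | ¬∃ a ∈ e, ∃ b ∈ e, τ a ≠ τ b}
      = #{c | ∀ v ∈ e ∩ V', ω v = c} * Fintype.card β ^ #(univ \ (V' ∪ e)) := by
  simp only [card_filter_monochromatic_eq_sum he, card_filter_const_on_extensions, sum_ite,
    sum_const_zero, add_zero, sum_const, smul_eq_mul]

theorem card_compl_union_add_card (V' e : Finset V) :
    #(univ \ (V' ∪ e)) + #e = #(univ \ V') + #(e ∩ V') := by
  have hunion := card_union_add_card_inter V' e
  have hle := card_le_univ (V' ∪ e)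
  have hle' := card_le_univ V'
  rw [card_univ_sdiff, card_univ_sdiff, inter_comm]
  omega

theorem average_cut_excess_edge (V' : Finset V) (ω : V → Fin 2) {e : Finset V}
    (he : e.Nonempty) :
    (#{τ ∈ extensions V' ω | ∃ a ∈ e, ∃ b ∈ e, τ a ≠ τ b} : ℚ) / 2 ^ #(univ \ V')
        - (1 - 2 / 2 ^ #e)
      = (2 - 2 ^ #(e ∩ V') * #{c | ∀ v ∈ e ∩ V', ω v = c}) / 2 ^ #e := by
  have hsplit := card_filter_add_card_filter_not (s := extensions V' ω)
    (p := fun τ => ∃ a ∈ e, ∃ b ∈ e, τ a ≠ τ b)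
  rw [card_extensions, card_filter_monochromatic_extensions V' ω he, Fintype.card_fin] at hsplit
  have hpow : (2 : ℚ) ^ #(univ \ (V' ∪ e)) * 2 ^ #e = 2 ^ #(univ \ V') * 2 ^ #(e ∩ V') := by
    rw [← pow_add, ← pow_add, card_compl_union_add_card]
  have hcut : (#{τ ∈ extensions V' ω | ∃ a ∈ e, ∃ b ∈ e, τ a ≠ τ b} : ℚ)
      = 2 ^ #(univ \ V') - #{c | ∀ v ∈ e ∩ V', ω v = c} * 2 ^ #(univ \ (V' ∪ e)) := by
    rw [eq_sub_iff_add_eq]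
    exact_mod_cast hsplit
  rw [hcut]
  field_simp
  linear_combination (-(#{c | ∀ v ∈ e ∩ V', ω v = c} : ℚ)) * hpow

end

/-- For a multihypergraph H and V' ⊆ V(H) with every edge meeting V' in at most two
vertices, the excess of any assignment ω on V' as a cut of the weighted graph R
(weights η_{u,v} = Σ_e 2^{2−|e|} over edges with e ∩ V' = {u,v}) equals the average
excess of ω as a V'-partial 2-cut of H. -/
theorem stmt_9 {V : Type*} [Fintype V] [DecidableEq V]
    (H : Multiset (Finset V)) (V' : Finset V)
    (hne : ∀ e ∈ H, e.Nonempty)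
    (hint : ∀ e ∈ H, (e ∩ V').card ≤ 2)
    (η : V → V → ℚ)
    (hη : ∀ u v, u ≠ v → η u v =
      ((H.filter (fun e => e ∩ V' = {u, v})).map (fun e => (4 : ℚ) / 2 ^ e.card)).sum)
    (ω : V → Fin 2) :
    ((1 : ℚ) / 2) * ∑ u ∈ V', ∑ v ∈ V', (if u ≠ v ∧ ω u ≠ ω v then η u v else 0)
      - (1 / 2) * ((1 / 2) * ∑ u ∈ V', ∑ v ∈ V', (if u ≠ v then η u v else 0))
    = (∑ τ ∈ Finset.univ.filter (fun τ : V → Fin 2 => ∀ v ∈ V', τ v = ω v),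
          (H.countP (fun e => ∃ a ∈ e, ∃ b ∈ e, τ a ≠ τ b) : ℚ))
        / 2 ^ ((Finset.univ \ V').card)
      - (H.map (fun e => 1 - 2 / (2 : ℚ) ^ e.card)).sum := by
  rw [graph_cut_excess_eq_sum_map hη, show univ.filter _ = extensions V' ω from rfl,
    ← Nat.cast_sum, sum_countP_eq_sum_map_card_filter, Nat.cast_multiset_sum, Multiset.map_map,
    ← Multiset.sum_map_div, ← Multiset.sum_map_sub]
  refine congrArg Multiset.sum (Multiset.map_congr rfl fun e he => ?_)
  rw [Function.comp_apply, average_cut_excess_edge V' ω (hne e he),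
    sum_sum_ite_pair_sign_eq inter_subset_right (hint e he)]
end

section
/- Let H be a mixed multihypergraph and V₁,...,V_t disjoint vertex subsets such that every edge f of H has vertices in at least |f| − 1 distinct parts Vᵢ (after extending with singletons to a partition of V(H)). If for each i there is a Vᵢ-partial 2-cut of H with average excess xᵢ, then H has a full 2-cut with excess at least Σᵢ xᵢ. -/
open scoped Classical

/-!
Glue the partial cuts into one random 2-cut: colour `W i` by `σ i` followed by an independent
uniformly random permutation `ε i` of the two colours, and every other vertex uniformly at random.
For an edge `e` put `aᵢ = |e ∩ W i|`, let `κᵢ` be the number of colours in which `σ i` is constant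
on `e ∩ W i`, and `dᵢ = 2^{aᵢ} κᵢ / 2`. Then `e` is monochromatic with probability `2 dᵢ / 2^|e|`
under the `i`-th partial cut and with probability `2 ∏ᵢ dᵢ / 2^|e|` under the glued cut. As
`dᵢ = 1` whenever `aᵢ ≤ 1`, the hypothesis on the edges leaves at most one `dᵢ ≠ 1`, so
`∏ᵢ dᵢ - 1 = ∑ᵢ (dᵢ - 1)`. Summed over the edges this says that the expected size of the glued
cut is `∑ᵢ (average size of the i-th partial cut) - (t - 1) ∑_e (1 - 2^{1-|e|})`, which is at least
`∑_e (1 - 2^{1-|e|}) + ∑ᵢ xᵢ`; some outcome of the glued cut does at least as well.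
-/

open Finset Function
open scoped BigOperators

lemma Finset.expect_piFinset_prod {α K : Type*} {β : α → Type*} [Fintype α] [DecidableEq α]
    [Semifield K] [CharZero K] (t : ∀ a, Finset (β a)) (f : ∀ a, β a → K) :
    𝔼 τ ∈ Fintype.piFinset t, ∏ a, f a (τ a) = ∏ a, 𝔼 b ∈ t a, f a b := by
  simp only [expect_eq_sum_div_card, ← prod_univ_sum, Fintype.card_piFinset, Nat.cast_prod,
    prod_div_distrib]

lemma Finset.expect_multiset_sum_map {α ι M : Type*} [AddCommMonoid M] [Module ℚ≥0 M]
    (s : Finset ι) (H : Multiset α) (f : α → ι → M) :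
    𝔼 i ∈ s, (H.map (f · i)).sum = (H.map fun e => 𝔼 i ∈ s, f e i).sum := by
  induction H using Multiset.induction_on with
  | empty => simp
  | cons a H ih => simp [expect_add_distrib, ih]

lemma Multiset.natCast_countP_eq_sum_map_ite {α R : Type*} [NonAssocSemiring R] (p : α → Prop)
    [DecidablePred p] (H : Multiset α) :
    (H.countP p : R) = (H.map fun e => if p e then 1 else 0).sum := by
  induction H using Multiset.induction_on with
  | empty => simp
  | cons a H ih => simp [Multiset.countP_cons, ih, add_comm]

lemma prod_sub_one_eq_sum_sub_one {ι R : Type*} [Fintype ι] [CommRing R] {d : ι → R}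
    (hd : ∀ i j, d i ≠ 1 → d j ≠ 1 → i = j) : ∏ i, d i - 1 = ∑ i, (d i - 1) := by
  by_cases h : ∃ j, d j ≠ 1
  · obtain ⟨j, hj⟩ := h
    have hother : ∀ i, i ≠ j → d i = 1 := fun i hij => by_contra fun hi => hij (hd i j hi hj)
    rw [Fintype.prod_eq_single j hother,
      Fintype.sum_eq_single j fun i hij => by rw [hother i hij, sub_self]]
  · simp only [not_exists, not_not] at h
    simp [h]

lemma eq_of_two_le_of_sum_le_sum_min_add_one {ι : Type*} [Fintype ι] {a : ι → ℕ}
    (ha : ∑ i, a i ≤ ∑ i, min (a i) 1 + 1) : ∀ i j, 2 ≤ a i → 2 ≤ a j → i = j := by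
  intro i j hi hj
  by_contra hij
  have hsplit : ∑ k, a k = ∑ k, min (a k) 1 + ∑ k, (a k - min (a k) 1) := by
    rw [← sum_add_distrib]
    exact sum_congr rfl fun k _ => (Nat.add_sub_of_le (min_le_left _ _)).symm
  have hpair : (a i - min (a i) 1) + (a j - min (a j) 1) ≤ ∑ k, (a k - min (a k) 1) := by
    rw [← sum_pair (f := fun k => a k - min (a k) 1) hij]
    exact sum_le_sum_of_subset (subset_univ _)
  omega

section Colourings

variable {V β : Type*} [Fintype V] [DecidableEq V] [Fintype β] [DecidableEq β]

lemma filter_forall_mem_eq_piFinset (s : Finset V) (ω : V → β) :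
    univ.filter (fun τ : V → β => ∀ v ∈ s, τ v = ω v)
      = Fintype.piFinset fun v => if v ∈ s then {ω v} else univ := by
  ext τ
  simp only [mem_filter, mem_univ, true_and, Fintype.mem_piFinset]
  refine forall_congr' fun v => ?_
  split_ifs <;> simp [*]

lemma card_filter_forall_mem_eq (s : Finset V) (ω : V → β) :
    #(univ.filter fun τ : V → β => ∀ v ∈ s, τ v = ω v) = Fintype.card β ^ #(univ \ s) := by
  simp only [filter_forall_mem_eq_piFinset, Fintype.card_piFinset, apply_ite card, card_singleton,
    card_univ, prod_ite, prod_const_one, one_mul, prod_const, sdiff_eq_filter]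

lemma expect_forall_mem_eq_of_agree {K : Type*} [Semifield K] [CharZero K] [Nonempty β] (s e : Finset V) (ω : V → β) (c : β) :
    𝔼 τ ∈ univ.filter (fun τ : V → β => ∀ v ∈ s, τ v = ω v),
        (if ∀ v ∈ e, τ v = c then 1 else 0 : K)
      = (if ∀ v ∈ e ∩ s, ω v = c then 1 else 0) / (Fintype.card β : K) ^ #(e \ s) := by
  have hind : ∀ τ : V → β, (if ∀ v ∈ e, τ v = c then 1 else 0 : K)
      = ∏ v, if v ∈ e → τ v = c then 1 else 0 := fun τ => by rw [Fintype.prod_boole]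
  simp_rw [hind, filter_forall_mem_eq_piFinset]
  refine (expect_piFinset_prod _ fun v b => if v ∈ e → b = c then (1 : K) else 0).trans ?_
  have hfactor : ∀ v,
      𝔼 b ∈ (if v ∈ s then {ω v} else univ), (if v ∈ e → b = c then (1 : K) else 0)
        = if v ∈ e then (if v ∈ s then (if ω v = c then 1 else 0) else (Fintype.card β : K)⁻¹)
          else 1 := by
    intro v
    by_cases he : v ∈ e <;> by_cases hs : v ∈ s <;> simp [he, hs, eq_comm]
  rw [prod_congr rfl fun v _ => hfactor v, prod_ite_mem, univ_inter, prod_ite,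
    filter_mem_eq_inter, filter_notMem_eq_sdiff, prod_const, inv_pow, div_eq_mul_inv]
  simp only [prod_boole]
  congr 2

lemma expect_forall_mem_eq {K : Type*} [Semifield K] [CharZero K] [Nonempty β] (e : Finset V) (c : β) :
    𝔼 τ : V → β, (if ∀ v ∈ e, τ v = c then 1 else 0 : K) = 1 / (Fintype.card β : K) ^ #e := by
  simpa using expect_forall_mem_eq_of_agree (K := K) ∅ e (fun _ => c) c

lemma boole_exists_ne_eq_one_sub_sum {R : Type*} [Ring R] {e : Finset V} (he : e.Nonempty)
    (τ : V → β) :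
    (if ∃ a ∈ e, ∃ b ∈ e, τ a ≠ τ b then 1 else 0 : R)
      = 1 - ∑ c, if ∀ v ∈ e, τ v = c then 1 else 0 := by
  obtain ⟨v₀, hv₀⟩ := he
  by_cases hcut : ∃ a ∈ e, ∃ b ∈ e, τ a ≠ τ b
  · obtain ⟨a, ha, b, hb, hab⟩ := hcut
    have hnot : ∀ c, ¬∀ v ∈ e, τ v = c := fun c h => hab ((h a ha).trans (h b hb).symm)
    rw [if_pos ⟨a, ha, b, hb, hab⟩]
    simp [hnot]
  · rw [if_neg hcut]
    simp only [not_exists, not_and, not_not] at hcut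
    have hiff : ∀ c, (∀ v ∈ e, τ v = c) ↔ τ v₀ = c :=
      fun c => ⟨fun h => h v₀ hv₀, fun h v hv => (hcut v hv v₀ hv₀).trans h⟩
    simp [hiff]

lemma expect_cut_of_agree {K : Type*} [Field K] [CharZero K] [Nonempty β] {e : Finset V} (he : e.Nonempty) (s : Finset V)
    (ω : V → β) :
    𝔼 τ ∈ univ.filter (fun τ : V → β => ∀ v ∈ s, τ v = ω v),
        (if ∃ a ∈ e, ∃ b ∈ e, τ a ≠ τ b then 1 else 0 : K)
      = 1 - (∑ c, if ∀ v ∈ e ∩ s, ω v = c then (1 : K) else 0) / (Fintype.card β : K) ^ #(e \ s) := by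
  have hne : (univ.filter fun τ : V → β => ∀ v ∈ s, τ v = ω v).Nonempty := ⟨ω, by simp⟩
  simp_rw [boole_exists_ne_eq_one_sub_sum he, expect_sub_distrib, expect_const hne,
    expect_sum_comm, expect_forall_mem_eq_of_agree, sum_div]

lemma card_pow_mul_sum_boole_of_card_le_one {K : Type*} [Semiring K] [Nonempty β] {A : Finset V} (hA : #A ≤ 1)
    (σ : V → β) :
    (Fintype.card β : K) ^ #A * ∑ c, (if ∀ v ∈ A, σ v = c then 1 else 0) = Fintype.card β := by
  rcases Nat.le_one_iff_eq_zero_or_eq_one.1 hA with h | h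
  · simp [card_eq_zero.1 h]
  · obtain ⟨v, rfl⟩ := card_eq_one.1 h
    simp

lemma expect_forall_add_eq {K : Type*} [Semifield K] [CharZero K] [AddCommGroup β] (A : Finset V) (σ : V → β) (c : β) :
    𝔼 y, (if ∀ v ∈ A, σ v + y = c then 1 else 0 : K)
      = (∑ d, if ∀ v ∈ A, σ v = d then 1 else 0) / Fintype.card β := by
  rw [Fintype.expect_eq_sum_div_card]
  congr 1
  refine Fintype.sum_equiv (Equiv.subLeft c) _ _ fun y => ?_
  simp only [Equiv.subLeft_apply, eq_sub_iff_add_eq]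

end Colourings

section Glue

variable {ι V : Type*}

noncomputable def glue (W : ι → Finset V) (σ : ι → V → Fin 2) (ε : ι → Fin 2) (ρ : V → Fin 2)
    (v : V) : Fin 2 :=
  if h : ∃ i, v ∈ W i then σ h.choose v + ε h.choose else ρ v

variable {W : ι → Finset V} (σ : ι → V → Fin 2) (ε : ι → Fin 2) (ρ : V → Fin 2)

lemma glue_of_mem (hW : Pairwise (Disjoint on W)) {i : ι} {v : V} (hv : v ∈ W i) :
    glue W σ ε ρ v = σ i v + ε i := by
  have h : ∃ j, v ∈ W j := ⟨i, hv⟩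
  obtain rfl : h.choose = i := by
    by_contra hne
    exact disjoint_left.1 (hW hne) h.choose_spec hv
  exact dif_pos h

lemma glue_of_forall_notMem {v : V} (hv : ∀ i, v ∉ W i) : glue W σ ε ρ v = ρ v :=
  dif_neg (not_exists.2 hv)

lemma forall_glue_eq_iff [DecidableEq V] (hW : Pairwise (Disjoint on W)) (e : Finset V)
    (c : Fin 2) :
    (∀ v ∈ e, glue W σ ε ρ v = c) ↔
      (∀ i, ∀ v ∈ e ∩ W i, σ i v + ε i = c) ∧ ∀ v ∈ e, (∀ i, v ∉ W i) → ρ v = c := by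
  constructor
  · intro h
    refine ⟨fun i v hv => ?_, fun v hv hout => ?_⟩
    · rw [mem_inter] at hv
      rw [← glue_of_mem σ ε ρ hW hv.2]
      exact h v hv.1
    · rw [← glue_of_forall_notMem σ ε ρ hout]
      exact h v hv
  · rintro ⟨hin, hout⟩ v hv
    by_cases hv' : ∃ i, v ∈ W i
    · obtain ⟨i, hi⟩ := hv'
      rw [glue_of_mem σ ε ρ hW hi]
      exact hin i v (mem_inter.2 ⟨hv, hi⟩)
    · rw [glue_of_forall_notMem σ ε ρ (not_exists.1 hv')]
      exact hout v hv (not_exists.1 hv')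

variable [Fintype ι] [DecidableEq ι] [Fintype V] [DecidableEq V]

lemma expect_forall_glue_eq (hW : Pairwise (Disjoint on W)) (e : Finset V) (c : Fin 2) :
    𝔼 ε, 𝔼 ρ, (if ∀ v ∈ e, glue W σ ε ρ v = c then 1 else 0 : ℚ)
      = (∏ i, 𝔼 y, if ∀ v ∈ e ∩ W i, σ i v + y = c then 1 else 0)
        / 2 ^ #(e.filter fun v => ∀ i, v ∉ W i) := by
  have hsplit : ∀ ε ρ, (if ∀ v ∈ e, glue W σ ε ρ v = c then 1 else 0 : ℚ)
      = (∏ i, if ∀ v ∈ e ∩ W i, σ i v + ε i = c then 1 else 0)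
        * if ∀ v ∈ e.filter (fun v => ∀ i, v ∉ W i), ρ v = c then 1 else 0 := by
    intro ε ρ
    rw [Fintype.prod_boole, ite_zero_mul_ite_zero, one_mul]
    simp only [forall_glue_eq_iff σ ε ρ hW e c, mem_filter, and_imp]
  simp_rw [hsplit, ← mul_expect, ← expect_mul, expect_forall_mem_eq, mul_one_div]
  congr 1
  simpa only [Fintype.piFinset_univ] using expect_piFinset_prod (fun _ => univ)
    fun i y => if ∀ v ∈ e ∩ W i, σ i v + y = c then (1 : ℚ) else 0

lemma expect_cut_glue (hW : Pairwise (Disjoint on W)) {e : Finset V} (he : e.Nonempty) :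
    𝔼 ε, 𝔼 ρ, (if ∃ a ∈ e, ∃ b ∈ e, glue W σ ε ρ a ≠ glue W σ ε ρ b then 1 else 0 : ℚ)
      = 1 - 2 * (∏ i, (∑ c, if ∀ v ∈ e ∩ W i, σ i v = c then 1 else 0) / 2)
          / 2 ^ #(e.filter fun v => ∀ i, v ∉ W i) := by
  simp_rw [boole_exists_ne_eq_one_sub_sum he, expect_sub_distrib, Fintype.expect_const,
    expect_sum_comm, expect_forall_glue_eq σ hW, expect_forall_add_eq]
  simp only [sum_const, card_univ, Fintype.card_fin, nsmul_eq_mul, Nat.cast_ofNat]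
  ring

omit [DecidableEq ι] [Fintype V] in
lemma card_filter_forall_notMem_add_sum_card_inter (hW : Pairwise (Disjoint on W))
    (e : Finset V) : #(e.filter fun v => ∀ i, v ∉ W i) + ∑ i, #(e ∩ W i) = #e := by
  have hin : e.filter (fun v => ¬∀ i, v ∉ W i) = univ.biUnion fun i => e ∩ W i := by
    ext v
    simp
  rw [← card_biUnion fun i _ j _ hij => (hW hij).mono inter_subset_right inter_subset_right,
    ← hin, card_filter_add_card_filter_not]

lemma expect_cut_glue_eq_sum_sub (hW : Pairwise (Disjoint on W)) {e : Finset V}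
    (he : e.Nonempty) (hspread : ∀ i j, 2 ≤ #(e ∩ W i) → 2 ≤ #(e ∩ W j) → i = j) :
    𝔼 ε, 𝔼 ρ, (if ∃ a ∈ e, ∃ b ∈ e, glue W σ ε ρ a ≠ glue W σ ε ρ b then 1 else 0 : ℚ)
      = ∑ i, 𝔼 τ ∈ univ.filter (fun τ : V → Fin 2 => ∀ v ∈ W i, τ v = σ i v),
          (if ∃ a ∈ e, ∃ b ∈ e, τ a ≠ τ b then 1 else 0)
        - (Fintype.card ι - 1) * (1 - 2 / 2 ^ #e) := by
  set κ : ι → ℚ := fun i => ∑ c, if ∀ v ∈ e ∩ W i, σ i v = c then 1 else 0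
  set d : ι → ℚ := fun i => 2 ^ #(e ∩ W i) * κ i / 2 with hd
  have hd_ne_one : ∀ i j, d i ≠ 1 → d j ≠ 1 → i = j := by
    have hsmall : ∀ i, d i ≠ 1 → 2 ≤ #(e ∩ W i) := fun i hi => by
      by_contra h
      have h2 : (2 : ℚ) ^ #(e ∩ W i) * κ i = 2 := by
        simpa only [Fintype.card_fin, Nat.cast_ofNat] using
          card_pow_mul_sum_boole_of_card_le_one (A := e ∩ W i) (β := Fin 2) (by omega) (σ i)
      exact hi (by simp only [hd, h2]; norm_num)
    exact fun i j hi hj => hspread i j (hsmall i hi) (hsmall j hj)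
  have hpart : ∀ i, κ i / 2 ^ #(e \ W i) = 2 * d i / 2 ^ #e := fun i => by
    rw [← card_sdiff_add_card_inter e (W i), pow_add, hd]
    field_simp
  have hglue : 2 * (∏ i, κ i / 2) / 2 ^ #(e.filter fun v => ∀ i, v ∉ W i)
      = 2 * (∏ i, d i) / 2 ^ #e := by
    rw [← card_filter_forall_notMem_add_sum_card_inter hW e, pow_add, ← prod_pow_eq_pow_sum]
    simp only [hd, mul_div_assoc, prod_mul_distrib]
    field_simp
  have key := prod_sub_one_eq_sum_sub_one hd_ne_one
  simp only [expect_cut_glue σ hW he, expect_cut_of_agree he, Fintype.card_fin, Nat.cast_ofNat]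
  rw [sum_congr rfl fun i _ => by rw [hpart i], hglue]
  rw [sum_sub_distrib, sum_const, card_univ, nsmul_eq_mul, mul_one] at key ⊢
  rw [← sum_div, ← mul_sum]
  linear_combination (-2 / 2 ^ #e) * key

end Glue

/-- If every edge f of a mixed multihypergraph H has vertices in at least |f| − 1
distinct parts of the partition obtained from the disjoint sets V₁,…,V_t by adding
singletons, and each Vᵢ carries a partial 2-cut of average excess xᵢ, then H has a
2-cut with excess at least Σᵢ xᵢ. -/
theorem stmt_10 {V : Type*} [Fintype V] [DecidableEq V]
    (H : Multiset (Finset V)) (hne : ∀ e ∈ H, e.Nonempty)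
    (t : ℕ) (W : Fin t → Finset V)
    (hdisj : ∀ i j, i ≠ j → Disjoint (W i) (W j))
    (hspread : ∀ f ∈ H,
      (∑ i, (f ∩ W i).card) ≤ (∑ i, min ((f ∩ W i).card) 1) + 1)
    (x : Fin t → ℚ)
    (hcuts : ∀ i, ∃ ω : V → Fin 2,
      (∑ τ ∈ Finset.univ.filter (fun τ : V → Fin 2 => ∀ v ∈ W i, τ v = ω v),
          (H.countP (fun e => ∃ a ∈ e, ∃ b ∈ e, τ a ≠ τ b) : ℚ))
          / 2 ^ ((Finset.univ \ W i).card)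
        - (H.map (fun e => 1 - 2 / (2 : ℚ) ^ e.card)).sum ≥ x i) :
    ∃ ω : V → Fin 2,
      (H.countP (fun e => ∃ a ∈ e, ∃ b ∈ e, ω a ≠ ω b) : ℚ)
        ≥ (H.map (fun e => 1 - 2 / (2 : ℚ) ^ e.card)).sum + ∑ i, x i := by
  choose σ hσ using hcuts
  set B := (H.map fun e => 1 - 2 / (2 : ℚ) ^ e.card).sum
  set cutSize : (V → Fin 2) → ℚ := fun τ => H.countP fun e => ∃ a ∈ e, ∃ b ∈ e, τ a ≠ τ b
  have hpartial : ∀ i, B + x i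
      ≤ 𝔼 τ ∈ univ.filter (fun τ : V → Fin 2 => ∀ v ∈ W i, τ v = σ i v), cutSize τ := by
    intro i
    have := hσ i
    rw [expect_eq_sum_div_card, card_filter_forall_mem_eq, Fintype.card_fin]
    push_cast
    linarith
  have hglue : 𝔼 ε, 𝔼 ρ, cutSize (glue W σ ε ρ)
      = ∑ i, 𝔼 τ ∈ univ.filter (fun τ : V → Fin 2 => ∀ v ∈ W i, τ v = σ i v), cutSize τ
        - (t - 1) * B := by
    simp only [cutSize, Multiset.natCast_countP_eq_sum_map_ite, expect_multiset_sum_map]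
    rw [Multiset.map_congr rfl fun e he => expect_cut_glue_eq_sum_sub σ hdisj (hne e he)
      (eq_of_two_le_of_sum_le_sum_min_add_one (hspread e he)), Multiset.sum_map_sub,
      Multiset.sum_map_sum, Multiset.sum_map_mul_left, Fintype.card_fin]
  have hmean : B + ∑ i, x i ≤ 𝔼 ε, 𝔼 ρ, cutSize (glue W σ ε ρ) := by
    have := sum_le_sum fun i (_ : i ∈ univ) => hpartial i
    rw [sum_add_distrib, sum_const, card_univ, Fintype.card_fin, nsmul_eq_mul] at this
    rw [hglue]
    linarith
  obtain ⟨ε, -, hε⟩ := exists_le_of_le_expect univ_nonempty hmean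
  obtain ⟨ρ, -, hρ⟩ := exists_le_of_le_expect univ_nonempty hε
  exact ⟨glue W σ ε ρ, hρ⟩
end

section
/- Consider a uniformly random r-cut (each vertex independently uniform in {1,...,r}) of a multihypergraph, an edge e of size k, and a subset f ⊆ e with |f| ≥ 2. Let E_{f,2} be the event that f receives at least 2 distinct colours and E_e the event that e receives all r colours. Then P(E_e | E_{f,2}) > P(E_e | not E_{f,2}), and consequently P(E_e | E_{f,2}) ≥ S(k,r)·r!/r^k + c for a positive constant c depending only on k and r. -/
/-!
Condition on the colouring `g` of `f`. The number of colourings of `e \ f` completing `g` to a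
multicoloured colouring of `e` is `coverCount (image g)`, which is monotone in the set of colours
`g` uses. It takes the same value `N` for every constant `g` (by symmetry of the colours), is at
least `N` for every `g`, and exceeds `N` for some non-constant `g` as soon as `k ≥ r`: take a
surjective colouring of `e` in which one vertex of `f` is the only one of its colour. Averaging
gives `c * b < a * d` for the counts `a = #(E_e ∩ E_{f,2})`, `b = #E_{f,2}`, `c = #(E_e \ E_{f,2})`,
`d = #(not E_{f,2})` of colourings of `e`. Since `a + c = S(k,r) r!` and `b + d = r ^ k`, the
integrality of `a * d - c * b ≥ 1` makes `a / b` exceed the mediant `(a + c) / (b + d)` by at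
least `1 / (r ^ k) ^ 2`. The vertices outside `e` only multiply every count by the same factor.
-/

open scoped Classical

def stirling2 : ℕ → ℕ → ℕ
  | 0, 0 => 1
  | 0, _ + 1 => 0
  | _ + 1, 0 => 0
  | n + 1, r + 1 => stirling2 n r + (r + 1) * stirling2 n (r + 1)

open Finset Function

section Cover

variable {W α : Type*} [Fintype W] [DecidableEq W] [Fintype α] [DecidableEq α]

variable (W) in
noncomputable def coverCount (S : Finset α) : ℕ := #{h : W → α | ∀ i ∉ S, ∃ w, h w = i}

theorem coverCount_mono {S T : Finset α} (hST : S ⊆ T) : coverCount W S ≤ coverCount W T :=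
  card_le_card <| monotone_filter_right _ fun _ _ hh i hi ↦ hh i fun hiS ↦ hi (hST hiS)

theorem coverCount_lt_coverCount {S T : Finset α} (hST : S ⊆ T) (h : W → α)
    (hT : ∀ i ∉ T, ∃ w, h w = i) (hS : ¬ ∀ i ∉ S, ∃ w, h w = i) :
    coverCount W S < coverCount W T :=
  card_lt_card <| (ssubset_iff_of_subset (monotone_filter_right _
    fun _ _ hh i hi ↦ hh i fun hiS ↦ hi (hST hiS))).2 ⟨h, by simpa using hT, by simpa using hS⟩

theorem coverCount_map_perm (σ : Equiv.Perm α) (S : Finset α) :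
    coverCount W (S.map σ.toEmbedding) = coverCount W S := by
  refine (card_equiv ((Equiv.refl W).arrowCongr σ) fun h ↦ ?_).symm
  simp only [mem_filter, mem_univ, true_and, mem_map_equiv]
  refine ⟨fun hh i hi ↦ ?_, fun hh i hi ↦ ?_⟩
  · obtain ⟨w, hw⟩ := hh (σ.symm i) hi
    exact ⟨w, by simp [hw]⟩
  · obtain ⟨w, hw⟩ := hh (σ i) (by simpa using hi)
    exact ⟨w, σ.injective hw⟩

theorem coverCount_singleton_eq_singleton (c c' : α) :
    coverCount W {c} = coverCount W {c'} := by
  simpa using (coverCount_map_perm (W := W) (Equiv.swap c c') {c}).symm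

theorem card_surjective_subtype_ne (c : α) :
    #{h : W → {i // i ≠ c} | Surjective h}
      = #{h : W → α | (∀ i ∉ ({c} : Finset α), ∃ w, h w = i) ∧ ¬ Surjective h} := by
  refine card_bij (fun h _ w ↦ (h w : α)) (fun h hh ↦ ?_) (fun h₁ _ h₂ _ he ↦ ?_) fun h hh ↦ ?_
  · simp only [mem_filter, mem_univ, true_and] at hh ⊢
    refine ⟨fun i hi ↦ ?_, fun hs ↦ ?_⟩
    · obtain ⟨w, hw⟩ := hh ⟨i, by simpa using hi⟩
      exact ⟨w, congrArg Subtype.val hw⟩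
    · obtain ⟨w, hw⟩ := hs c
      exact (h w).2 hw
  · funext w
    exact Subtype.ext (congrFun he w)
  · simp only [mem_filter, mem_univ, true_and, mem_singleton] at hh
    obtain ⟨hcov, hns⟩ := hh
    have hmiss (w : W) : h w ≠ c := fun hw ↦ hns fun i ↦ by
      by_cases hi : i = c
      · exact ⟨w, hw.trans hi.symm⟩
      · exact hcov i hi
    refine ⟨fun w ↦ ⟨h w, hmiss w⟩, ?_, rfl⟩
    simp only [mem_filter, mem_univ, true_and]
    intro ⟨i, hi⟩
    obtain ⟨w, hw⟩ := hcov i hi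
    exact ⟨w, Subtype.ext hw⟩

theorem coverCount_singleton_eq_add (c : α) :
    coverCount W {c} = #{h : W → α | Surjective h} + #{h : W → {i // i ≠ c} | Surjective h} := by
  rw [coverCount, card_surjective_subtype_ne,
    ← card_filter_add_card_filter_not (s := {h : W → α | ∀ i ∉ ({c} : Finset α), ∃ w, h w = i})
      Surjective, filter_filter, filter_filter]
  congr 2
  exact filter_congr fun h _ ↦ ⟨And.right, fun hs ↦ ⟨fun i _ ↦ hs i, hs⟩⟩

theorem coverCount_singleton_le_coverCount_image {ι : Type*} [Fintype ι] [Nonempty ι] (c : α)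
    (g : ι → α) : coverCount W {c} ≤ coverCount W (univ.image g) := by
  obtain ⟨u⟩ := ‹Nonempty ι›
  exact (coverCount_singleton_eq_singleton c (g u)).trans_le
    (coverCount_mono (singleton_subset_iff.2 (mem_image_of_mem _ (mem_univ _))))

theorem coverCount_image_of_forall_eq {ι : Type*} [Fintype ι] [Nonempty ι] (c : α) {g : ι → α}
    (hg : ¬ ∃ u v, g u ≠ g v) : coverCount W (univ.image g) = coverCount W {c} := by
  obtain ⟨u⟩ := ‹Nonempty ι›
  simp only [not_exists, not_not] at hg
  have : univ.image g = {g u} := by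
    ext i
    simp only [mem_image, mem_univ, true_and, mem_singleton]
    exact ⟨fun ⟨v, hv⟩ ↦ hv ▸ hg v u, fun hi ↦ ⟨u, hi.symm⟩⟩
  rw [this, coverCount_singleton_eq_singleton]

end Cover

theorem card_surjective_fin (n : ℕ) (α : Type*) [Fintype α] [DecidableEq α] :
    #{g : Fin n → α | Surjective g} = stirling2 n (Fintype.card α) * (Fintype.card α).factorial := by
  induction n generalizing α with
  | zero =>
    rcases hα : Fintype.card α with _ | r
    · have := Fintype.card_eq_zero_iff.mp hα
      simp [stirling2, Surjective]
    · obtain ⟨a⟩ : Nonempty α := Fintype.card_pos_iff.mp (by omega)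
      simp only [stirling2, zero_mul, card_eq_zero, filter_eq_empty_iff, mem_univ, true_implies]
      exact fun g hg ↦ (hg a).elim finZeroElim
  | succ n ih =>
    have hcons (c : α) (g : Fin n → α) :
        Surjective (Fin.cons c g : Fin (n + 1) → α) ↔ ∀ i ∉ ({c} : Finset α), ∃ j, g j = i := by
      simp only [← Set.range_eq_univ, Fin.range_cons, Set.eq_univ_iff_forall, Set.mem_insert_iff,
        Set.mem_range, mem_singleton]
      exact forall_congr' fun i ↦ or_iff_not_imp_left
    have hsplit : #{g : Fin (n + 1) → α | Surjective g} = ∑ c : α, coverCount (Fin n) {c} := by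
      rw [← card_equiv (s := {p : α × (Fin n → α) | Surjective (Fin.cons p.1 p.2 : Fin (n + 1) → α)})
        (Fin.consEquiv fun _ ↦ α) (by simp [Fin.consEquiv]), card_filter, Fintype.sum_prod_type]
      refine sum_congr rfl fun c _ ↦ ?_
      rw [coverCount, ← card_filter]
      -- `convert` only reconciles the `Decidable` instances of the two filters
      convert congrArg card (filter_congr fun g _ ↦ hcons c g)
    have hcard (c : α) : Fintype.card {i // i ≠ c} = Fintype.card α - 1 := by simp
    rw [hsplit, sum_congr rfl fun c _ ↦ by
      rw [coverCount_singleton_eq_add, ih α, ih {i // i ≠ c}, hcard]]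
    simp only [sum_const, card_univ, smul_eq_mul]
    rcases Fintype.card α with _ | r
    · simp [stirling2]
    · simp only [stirling2, Nat.add_sub_cancel, Nat.factorial_succ]
      ring

theorem card_surjective (X α : Type*) [Fintype X] [DecidableEq X] [Fintype α] [DecidableEq α] :
    #{g : X → α | Surjective g}
      = stirling2 (Fintype.card X) (Fintype.card α) * (Fintype.card α).factorial := by
  rw [← card_surjective_fin]
  refine card_equiv ((Fintype.equivFin X).arrowCongr (Equiv.refl α)) fun g ↦ ?_
  simp only [mem_filter, mem_univ, true_and]
  exact (Equiv.surjective_comp _ g).symm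

theorem card_filter_constant (ι α : Type*) [Fintype ι] [DecidableEq ι] [Nonempty ι] [Fintype α]
    [DecidableEq α] : #{g : ι → α | ¬ ∃ u v, g u ≠ g v} = Fintype.card α := by
  obtain ⟨u₀⟩ := ‹Nonempty ι›
  rw [← card_univ, ← card_image_of_injective univ (const_injective (α := ι) (β := α))]
  congr 1
  ext g
  simp only [not_exists, not_not, mem_filter, mem_univ, true_and, mem_image]
  exact ⟨fun hg ↦ ⟨g u₀, funext fun u ↦ hg u₀ u⟩, by rintro ⟨c, rfl⟩ u v; rfl⟩

theorem surjective_iff_forall_notMem_image_restrict {E α : Type*} [DecidableEq α] (F : Finset E)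
    (ω : E → α) :
    Surjective ω ↔ ∀ i ∉ univ.image (F.restrict ω), ∃ w : {x // x ∉ F}, ω w = i := by
  refine ⟨fun hω i hi ↦ ?_, fun hω i ↦ ?_⟩
  · obtain ⟨x, rfl⟩ := hω i
    have hx : x ∉ F := fun hx ↦ hi (mem_image.2 ⟨⟨x, hx⟩, mem_univ _, rfl⟩)
    exact ⟨⟨x, hx⟩, rfl⟩
  · by_cases hi : i ∈ univ.image (F.restrict ω)
    · obtain ⟨x, -, hx⟩ := mem_image.1 hi
      exact ⟨x, hx⟩
    · obtain ⟨w, hw⟩ := hω i hi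
      exact ⟨w, hw⟩

theorem add_div_add_add_one_div_sq_le_div {a b c d : ℕ} (hb : 0 < b) (h : c * b < a * d) :
    ((a + c : ℕ) : ℚ) / (b + d : ℕ) + 1 / ((b + d : ℕ) : ℚ) ^ 2 ≤ a / b := by
  have hB : (0 : ℚ) < (b + d : ℕ) := by positivity
  have hkey : b * (a + c) * (b + d) + b ≤ a * (b + d) ^ 2 := by nlinarith
  rw [div_add_div _ _ hB.ne' (by positivity), div_le_div_iff₀ (by positivity) (by positivity)]
  have : ((b * (a + c) * (b + d) + b : ℕ) : ℚ) ≤ (a * (b + d) ^ 2 : ℕ) := by exact_mod_cast hkey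
  push_cast at this ⊢
  nlinarith

section Colourings

variable {E α : Type*} [Fintype E] [DecidableEq E] [Fintype α]

theorem card_filter_eq_mul_of_iff_restrict (s : Finset E) {R : (E → α) → Prop} [DecidablePred R]
    (P : (s → α) → Prop) [DecidablePred P] (hR : ∀ ω, R ω ↔ P (s.restrict ω)) :
    #{ω : E → α | R ω} = #{g : s → α | P g} * Fintype.card ({x // x ∉ s} → α) := by
  rw [card_equiv (t := {q : (s → α) × ({x // x ∉ s} → α) | P q.1})
    (Equiv.piEquivPiSubtypeProd (· ∈ s) fun _ ↦ α) fun ω ↦ by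
      simp only [mem_filter, mem_univ, true_and]; exact hR ω,
    ← univ_product_univ, filter_product_left, card_product, card_univ]

variable [DecidableEq α]

theorem card_filter_eq_sum_coverCount (F : Finset E) {R : (E → α) → Prop} [DecidablePred R]
    (Q : (F → α) → Prop) [DecidablePred Q] (hR : ∀ ω, R ω ↔ Surjective ω ∧ Q (F.restrict ω)) :
    #{ω : E → α | R ω} = ∑ g ∈ {g | Q g}, coverCount {x // x ∉ F} (univ.image g) := by
  rw [card_equiv (t := {q : (F → α) × ({x // x ∉ F} → α) |
      (∀ i ∉ univ.image q.1, ∃ w, q.2 w = i) ∧ Q q.1})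
    (Equiv.piEquivPiSubtypeProd (· ∈ F) fun _ ↦ α)
    fun ω ↦ by
      simp only [mem_filter, mem_univ, true_and]
      exact (hR ω).trans (and_congr_left' (surjective_iff_forall_notMem_image_restrict F ω)),
    card_filter, Fintype.sum_prod_type, sum_filter]
  refine sum_congr rfl fun g _ ↦ ?_
  split_ifs with hg
  · simp only [hg, and_true, coverCount, card_filter]
  · simp [hg]

theorem exists_surjective_fiber_singleton (hα : 1 < Fintype.card α)
    (hE : Fintype.card α ≤ Fintype.card E) (u : E) :
    ∃ ω : E → α, Surjective ω ∧ ∀ x, ω x = ω u → x = u := by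
  obtain ⟨i⟩ : Nonempty α := Fintype.card_pos_iff.mp (by omega)
  have : Nonempty {j // j ≠ i} := Fintype.card_pos_iff.mp (by simp; omega)
  obtain ⟨s, hs⟩ : ∃ s : {x // x ≠ u} → {j // j ≠ i}, Surjective s :=
    exists_surjective_iff.2 ⟨inferInstance, Function.Embedding.nonempty_of_card_le (by simp; omega)⟩
  refine ⟨fun x ↦ if hx : x = u then i else s ⟨x, hx⟩, fun j ↦ ?_, fun x hx ↦ ?_⟩
  · by_cases hj : j = i
    · exact ⟨u, by simp [hj]⟩
    · obtain ⟨⟨x, hx⟩, hsx⟩ := hs ⟨j, hj⟩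
      exact ⟨x, by simp [hx, hsx]⟩
  · by_contra hxu
    simp only [hxu, dite_false, dite_true] at hx
    exact (s ⟨x, hxu⟩).2 hx

theorem exists_coverCount_singleton_lt (F : Finset E) (hF : 1 < #F)
    (hα : 1 < Fintype.card α) (hE : Fintype.card α ≤ Fintype.card E) (c : α) :
    ∃ g : F → α, (∃ u v, g u ≠ g v) ∧
      coverCount {x // x ∉ F} {c} < coverCount {x // x ∉ F} (univ.image g) := by
  obtain ⟨u₀, hu₀, u₁, hu₁, hu⟩ := one_lt_card.mp hF
  obtain ⟨ω, hω, hfib⟩ := exists_surjective_fiber_singleton hα hE u₁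
  refine ⟨F.restrict ω, ⟨⟨u₀, hu₀⟩, ⟨u₁, hu₁⟩, fun h ↦ hu (hfib u₀ h)⟩, ?_⟩
  rw [coverCount_singleton_eq_singleton c (ω u₀)]
  refine coverCount_lt_coverCount
    (singleton_subset_iff.2 (mem_image_of_mem _ (mem_univ (⟨u₀, hu₀⟩ : F))))
    (fun w ↦ ω w) ((surjective_iff_forall_notMem_image_restrict F ω).1 hω) fun hcov ↦ ?_
  -- outside `F`, the colour `ω u₁` is missing
  obtain ⟨⟨w, hw⟩, hwu⟩ := hcov (ω u₁) (by simpa using fun h ↦ hu (hfib u₀ h.symm))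
  exact hw (hfib w hwu ▸ hu₁)

theorem card_mul_card_lt_card_mul_card (F : Finset E) (hF : 1 < #F)
    (hα : 1 < Fintype.card α) (hE : Fintype.card α ≤ Fintype.card E) :
    #{ω : E → α | Surjective ω ∧ ¬ ∃ u ∈ F, ∃ v ∈ F, ω u ≠ ω v}
        * #{ω : E → α | ∃ u ∈ F, ∃ v ∈ F, ω u ≠ ω v}
      < #{ω : E → α | Surjective ω ∧ ∃ u ∈ F, ∃ v ∈ F, ω u ≠ ω v}
        * #{ω : E → α | ¬ ∃ u ∈ F, ∃ v ∈ F, ω u ≠ ω v} := by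
  have : Nonempty F := (card_pos.mp (by omega)).coe_sort
  obtain ⟨c⟩ : Nonempty α := Fintype.card_pos_iff.mp (by omega)
  obtain ⟨g₀, hg₀, hlt⟩ := exists_coverCount_singleton_lt F hF hα hE c
  have hF' (ω : E → α) :
      (∃ u ∈ F, ∃ v ∈ F, ω u ≠ ω v) ↔ ∃ u v, F.restrict ω u ≠ F.restrict ω v := by
    simp
  rw [card_filter_eq_sum_coverCount F (fun g ↦ ¬ ∃ u v, g u ≠ g v)
      fun ω ↦ and_congr_right' (not_congr (hF' ω)),
    card_filter_eq_sum_coverCount F (fun g ↦ ∃ u v, g u ≠ g v) fun ω ↦ and_congr_right' (hF' ω),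
    card_filter_eq_mul_of_iff_restrict F (fun g ↦ ∃ u v, g u ≠ g v) hF',
    card_filter_eq_mul_of_iff_restrict F (fun g ↦ ¬ ∃ u v, g u ≠ g v) fun ω ↦ not_congr (hF' ω),
    sum_congr rfl fun g hg ↦ coverCount_image_of_forall_eq c (mem_filter.1 hg).2, sum_const,
    card_filter_constant, smul_eq_mul]
  have hsum : #{g : F → α | ∃ u v, g u ≠ g v} * coverCount {x // x ∉ F} {c}
      < ∑ g ∈ {g : F → α | ∃ u v, g u ≠ g v}, coverCount {x // x ∉ F} (univ.image g) := by
    rw [← smul_eq_mul, ← sum_const]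
    exact sum_lt_sum (fun g _ ↦ coverCount_singleton_le_coverCount_image c g)
      ⟨g₀, by simpa using hg₀, hlt⟩
  calc Fintype.card α * coverCount {x // x ∉ F} {c}
        * (#{g : F → α | ∃ u v, g u ≠ g v} * Fintype.card ({x // x ∉ F} → α))
      = #{g : F → α | ∃ u v, g u ≠ g v} * coverCount {x // x ∉ F} {c}
          * (Fintype.card α * Fintype.card ({x // x ∉ F} → α)) := by ring
    _ < _ := Nat.mul_lt_mul_of_pos_right hsum
      (Nat.mul_pos (by omega) (Fintype.card_pos_iff.2 ⟨fun _ ↦ c⟩))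

theorem div_card_lt_and_le (F : Finset E) (hF : 1 < #F)
    (hα : 1 < Fintype.card α) (hE : Fintype.card α ≤ Fintype.card E) :
    (#{ω : E → α | Surjective ω ∧ ¬ ∃ u ∈ F, ∃ v ∈ F, ω u ≠ ω v} : ℚ)
          / #{ω : E → α | ¬ ∃ u ∈ F, ∃ v ∈ F, ω u ≠ ω v}
        < #{ω : E → α | Surjective ω ∧ ∃ u ∈ F, ∃ v ∈ F, ω u ≠ ω v}
          / #{ω : E → α | ∃ u ∈ F, ∃ v ∈ F, ω u ≠ ω v} ∧
      (#{ω : E → α | Surjective ω} : ℚ) / (Fintype.card α ^ Fintype.card E : ℕ)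
          + 1 / ((Fintype.card α ^ Fintype.card E : ℕ) : ℚ) ^ 2
        ≤ #{ω : E → α | Surjective ω ∧ ∃ u ∈ F, ∃ v ∈ F, ω u ≠ ω v}
          / #{ω : E → α | ∃ u ∈ F, ∃ v ∈ F, ω u ≠ ω v} := by
  have h := card_mul_card_lt_card_mul_card F hF hα hE
  have hab : #{ω : E → α | Surjective ω ∧ ∃ u ∈ F, ∃ v ∈ F, ω u ≠ ω v}
      ≤ #{ω : E → α | ∃ u ∈ F, ∃ v ∈ F, ω u ≠ ω v} :=
    card_le_card (monotone_filter_right _ fun _ _ ↦ And.right)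
  have hb : 0 < #{ω : E → α | ∃ u ∈ F, ∃ v ∈ F, ω u ≠ ω v} := Nat.pos_of_ne_zero fun h0 ↦ by
    rw [h0, Nat.le_zero] at hab
    rw [h0, hab] at h
    simp at h
  have hd : 0 < #{ω : E → α | ¬ ∃ u ∈ F, ∃ v ∈ F, ω u ≠ ω v} := Nat.pos_of_ne_zero fun h0 ↦ by
    rw [h0] at h
    simp at h
  have hsurj : #{ω : E → α | Surjective ω ∧ ∃ u ∈ F, ∃ v ∈ F, ω u ≠ ω v}
      + #{ω : E → α | Surjective ω ∧ ¬ ∃ u ∈ F, ∃ v ∈ F, ω u ≠ ω v}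
        = #{ω : E → α | Surjective ω} := by
    rw [← card_filter_add_card_filter_not (s := {ω : E → α | Surjective ω})
      fun ω ↦ ∃ u ∈ F, ∃ v ∈ F, ω u ≠ ω v, filter_filter, filter_filter]
  have htot : #{ω : E → α | ∃ u ∈ F, ∃ v ∈ F, ω u ≠ ω v}
      + #{ω : E → α | ¬ ∃ u ∈ F, ∃ v ∈ F, ω u ≠ ω v} = Fintype.card α ^ Fintype.card E := by
    rw [card_filter_add_card_filter_not fun ω : E → α ↦ ∃ u ∈ F, ∃ v ∈ F, ω u ≠ ω v, card_univ,
      Fintype.card_fun]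
  rw [← hsurj, ← htot]
  exact ⟨(div_lt_div_iff₀ (by exact_mod_cast hd) (by exact_mod_cast hb)).2 (by exact_mod_cast h),
    add_div_add_add_one_div_sq_le_div hb h⟩

end Colourings

/-- For a uniformly random r-cut, an edge e of size k, and f ⊆ e with |f| ≥ 2:
conditioning on f receiving at least 2 colours strictly increases the probability
that e is multicoloured, and the conditional probability is at least
S(k,r)·r!/r^k + c for a constant c = c(k,r) > 0. -/
theorem stmt_17 (k r : ℕ) (hr : 2 ≤ r) (hk : r ≤ k) :
    ∃ c : ℚ, 0 < c ∧
      ∀ (V : Type) [Fintype V] [DecidableEq V] (e f : Finset V),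
        e.card = k → f ⊆ e → 2 ≤ f.card →
        ((((Finset.univ : Finset (V → Fin r)).filter
              (fun ω => (∀ i : Fin r, ∃ v ∈ e, ω v = i)
                ∧ ∃ u ∈ f, ∃ v ∈ f, ω u ≠ ω v)).card : ℚ)
            / (((Finset.univ : Finset (V → Fin r)).filter
              (fun ω => ∃ u ∈ f, ∃ v ∈ f, ω u ≠ ω v)).card : ℚ)
          > (((Finset.univ : Finset (V → Fin r)).filter
              (fun ω => (∀ i : Fin r, ∃ v ∈ e, ω v = i)
                ∧ ¬ ∃ u ∈ f, ∃ v ∈ f, ω u ≠ ω v)).card : ℚ)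
            / (((Finset.univ : Finset (V → Fin r)).filter
              (fun ω => ¬ ∃ u ∈ f, ∃ v ∈ f, ω u ≠ ω v)).card : ℚ))
        ∧ (((Finset.univ : Finset (V → Fin r)).filter
              (fun ω => (∀ i : Fin r, ∃ v ∈ e, ω v = i)
                ∧ ∃ u ∈ f, ∃ v ∈ f, ω u ≠ ω v)).card : ℚ)
            / (((Finset.univ : Finset (V → Fin r)).filter
              (fun ω => ∃ u ∈ f, ∃ v ∈ f, ω u ≠ ω v)).card : ℚ)
          ≥ (stirling2 k r * r.factorial : ℚ) / (r : ℚ) ^ k + c := by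
  have : NeZero r := ⟨by omega⟩
  refine ⟨1 / ((r : ℚ) ^ k) ^ 2, by positivity, fun V _ _ e f he hfe hf ↦ ?_⟩
  set F : Finset e := f.subtype (· ∈ e)
  have hA (ω : V → Fin r) : (∀ i, ∃ v ∈ e, ω v = i) ↔ Surjective (e.restrict ω) := by
    simp [Surjective]
  have hB (ω : V → Fin r) :
      (∃ u ∈ f, ∃ v ∈ f, ω u ≠ ω v) ↔ ∃ u ∈ F, ∃ v ∈ F, e.restrict ω u ≠ e.restrict ω v := by
    simp only [F, mem_subtype, Subtype.exists, Finset.restrict]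
    exact ⟨fun ⟨u, hu, v, hv, h⟩ ↦ ⟨u, hfe hu, hu, v, hfe hv, hv, h⟩,
      fun ⟨u, _, hu, v, _, hv, h⟩ ↦ ⟨u, hu, v, hv, h⟩⟩
  rw [card_filter_eq_mul_of_iff_restrict e (fun g ↦ Surjective g ∧ ∃ u ∈ F, ∃ v ∈ F, g u ≠ g v)
      fun ω ↦ and_congr (hA ω) (hB ω),
    card_filter_eq_mul_of_iff_restrict e (fun g ↦ ∃ u ∈ F, ∃ v ∈ F, g u ≠ g v) hB,
    card_filter_eq_mul_of_iff_restrict e (fun g ↦ Surjective g ∧ ¬ ∃ u ∈ F, ∃ v ∈ F, g u ≠ g v)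
      fun ω ↦ and_congr (hA ω) (not_congr (hB ω)),
    card_filter_eq_mul_of_iff_restrict e (fun g ↦ ¬ ∃ u ∈ F, ∃ v ∈ F, g u ≠ g v)
      fun ω ↦ not_congr (hB ω)]
  have hQ : (Fintype.card ({x // x ∉ e} → Fin r) : ℚ) ≠ 0 := by positivity
  simp only [Nat.cast_mul, mul_div_mul_right _ _ hQ]
  obtain ⟨hlt, hle⟩ := div_card_lt_and_le (α := Fin r) F
    (by rwa [card_subtype, filter_true_of_mem hfe]) (by simp; omega) (by simpa [he] using hk)
  rw [card_surjective, Fintype.card_coe, he, Fintype.card_fin] at hle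
  push_cast at hle
  exact ⟨hlt, hle⟩
end

section
/- Let G be a multigraph with m edges and maximum degree Δ. In a uniformly random ordering of the vertices, let d_<(v) be the number of edges from v to vertices preceding it. Then E[Σ_v √(d_<(v))] ≥ (1/2)·Σ_v √(deg(v)) ≥ m/(2√Δ). -/
/-!
Reversing a vertex ordering turns the edges from `v` to earlier vertices into the edges from `v`
to later ones, so for a loopless multigraph `d_<(v)` under an ordering and under its reverse add up
to `deg v`. Reversal is a bijection on orderings, hence averaging over an ordering and its reverse
and using `√x + √(d - x) ≥ √d` gives `E[Σ_v √d_<(v)] ≥ ½ Σ_v √(deg v)`. The second inequality is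
`√(deg v) ≥ deg v / √Δ` summed with the handshake lemma `Σ_v deg v = 2m`.
-/

theorem Multiset.countP_or_of_disjoint {α : Type*} (s : Multiset α) (p q : α → Prop)
    [DecidablePred p] [DecidablePred q] (hpq : ∀ a ∈ s, ¬(p a ∧ q a)) :
    s.countP (fun a => p a ∨ q a) = s.countP p + s.countP q := by
  simp only [Multiset.countP_eq_card_filter, ← Multiset.card_add, Multiset.filter_add_filter,
    Multiset.filter_eq_nil.2 hpq, add_zero]

theorem Multiset.sum_countP_eq_card {α β : Type*} [Fintype β] [DecidableEq β]
    (s : Multiset α) (f : α → β) :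
    ∑ b, s.countP (fun a => f a = b) = Multiset.card s := by
  induction s using Multiset.induction_on with
  | empty => simp
  | cons a s ih => simp [Multiset.countP_cons, Finset.sum_add_distrib, ih, add_comm]

theorem Real.sqrt_add_le_sqrt_add_sqrt {x y : ℝ} (hx : 0 ≤ x) (hy : 0 ≤ y) :
    √(x + y) ≤ √x + √y := by
  simpa only [Real.sqrt_eq_rpow] using Real.rpow_add_le_add_rpow hx hy (by norm_num) (by norm_num)

theorem Real.div_sqrt_le_sqrt_of_le {x y : ℝ} (hx : 0 ≤ x) (hxy : x ≤ y) : x / √y ≤ √x := by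
  rcases hx.eq_or_lt with rfl | hx
  · simp
  · calc x / √y ≤ x / √x := by gcongr
      _ = √x := Real.div_sqrt

theorem Fintype.card_nsmul_le_two_nsmul_sum {ι M : Type*} [Fintype ι] [AddCommMonoid M]
    [PartialOrder M] [IsOrderedAddMonoid M] (e : ι ≃ ι) {f : ι → M} {c : M}
    (h : ∀ i, c ≤ f i + f (e i)) : Fintype.card ι • c ≤ 2 • ∑ i, f i := by
  calc Fintype.card ι • c = ∑ _i : ι, c := by simp
    _ ≤ ∑ i, (f i + f (e i)) := Finset.sum_le_sum fun i _ => h i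
    _ = 2 • ∑ i, f i := by rw [Finset.sum_add_distrib, e.sum_comp, two_nsmul]

namespace Multigraph

variable {V : Type*} [DecidableEq V]

def degree (G : Multiset (V × V)) (v : V) : ℕ :=
  G.countP fun p => p.1 = v ∨ p.2 = v

def degreeBelow {α : Type*} [LinearOrder α] (G : Multiset (V × V)) (σ : V → α) (v : V) : ℕ :=
  G.countP fun p => (p.1 = v ∧ σ p.2 < σ v) ∨ (p.2 = v ∧ σ p.1 < σ v)

theorem degree_eq_add {G : Multiset (V × V)} (hloop : ∀ p ∈ G, p.1 ≠ p.2) (v : V) :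
    degree G v = G.countP (fun p => p.1 = v) + G.countP (fun p => p.2 = v) :=
  G.countP_or_of_disjoint _ _ fun p hp h => hloop p hp (h.1.trans h.2.symm)

theorem sum_degree [Fintype V] {G : Multiset (V × V)} (hloop : ∀ p ∈ G, p.1 ≠ p.2) :
    ∑ v, degree G v = 2 * Multiset.card G := by
  simp only [degree_eq_add hloop, Finset.sum_add_distrib, Multiset.sum_countP_eq_card, two_mul]

theorem degreeBelow_add_degreeBelow {α β : Type*} [LinearOrder α] [LinearOrder β]
    {G : Multiset (V × V)} (hloop : ∀ p ∈ G, p.1 ≠ p.2) {σ : V → α} (hσ : σ.Injective)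
    {τ : V → β} (hτ : ∀ x y, τ x < τ y ↔ σ y < σ x) (v : V) :
    degreeBelow G σ v + degreeBelow G τ v = degree G v := by
  simp only [degreeBelow, hτ]
  rw [degree, ← Multiset.countP_or_of_disjoint]
  · refine Multiset.countP_congr rfl fun p hp => ?_
    -- the other endpoint of an edge at `v` comes strictly before or strictly after `v`
    have hσp := hσ.ne (hloop p hp)
    grind
  · intro p _
    grind

theorem sqrt_degree_le {α β : Type*} [LinearOrder α] [LinearOrder β]
    {G : Multiset (V × V)} (hloop : ∀ p ∈ G, p.1 ≠ p.2) {σ : V → α} (hσ : σ.Injective)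
    {τ : V → β} (hτ : ∀ x y, τ x < τ y ↔ σ y < σ x) (v : V) :
    √(degree G v) ≤ √(degreeBelow G σ v) + √(degreeBelow G τ v) := by
  rw [← degreeBelow_add_degreeBelow hloop hσ hτ v, Nat.cast_add]
  exact Real.sqrt_add_le_sqrt_add_sqrt (Nat.cast_nonneg _) (Nat.cast_nonneg _)

theorem factorial_mul_sum_sqrt_degree_le [Fintype V] {G : Multiset (V × V)}
    (hloop : ∀ p ∈ G, p.1 ≠ p.2) :
    (Fintype.card V).factorial * ∑ v, √(degree G v) ≤
      2 * ∑ σ : V ≃ Fin (Fintype.card V), ∑ v, √(degreeBelow G σ v) := by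
  have hrev (σ : V ≃ Fin (Fintype.card V)) : ∑ v, √(degree G v) ≤
      ∑ v, √(degreeBelow G σ v) + ∑ v, √(degreeBelow G (σ.trans Fin.revPerm) v) := by
    rw [← Finset.sum_add_distrib]
    exact Finset.sum_le_sum fun v _ =>
      sqrt_degree_le hloop σ.injective (fun _ _ => Fin.rev_lt_rev) v
  have h := Fintype.card_nsmul_le_two_nsmul_sum (Equiv.equivCongr (Equiv.refl V) Fin.revPerm)
    (f := fun σ => ∑ v, √(degreeBelow G σ v)) fun σ => by simpa using hrev σ
  rwa [Fintype.card_equiv (Fintype.equivFin V), nsmul_eq_mul, nsmul_eq_mul, Nat.cast_ofNat] at h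

theorem two_mul_card_div_sqrt_le_sum_sqrt_degree [Fintype V] {G : Multiset (V × V)}
    (hloop : ∀ p ∈ G, p.1 ≠ p.2) {Δ : ℕ} (hΔ : ∀ v, degree G v ≤ Δ) :
    2 * Multiset.card G / √Δ ≤ ∑ v, √(degree G v) := by
  calc (2 * Multiset.card G : ℝ) / √Δ = ∑ v, (degree G v : ℝ) / √Δ := by
        rw [← Finset.sum_div, ← Nat.cast_sum, sum_degree hloop, Nat.cast_mul, Nat.cast_ofNat]
    _ ≤ ∑ v, √(degree G v) := Finset.sum_le_sum fun v _ =>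
        Real.div_sqrt_le_sqrt_of_le (Nat.cast_nonneg _) (by exact_mod_cast hΔ v)

end Multigraph

/-- For a multigraph with m edges and maximum degree Δ, in a uniformly random
vertex ordering, E[Σ_v √(d_<(v))] ≥ (1/2)·Σ_v √(deg v) ≥ m/(2√Δ). -/
theorem stmt_18 {V : Type*} [Fintype V] [DecidableEq V]
    (G : Multiset (V × V)) (hloop : ∀ p ∈ G, p.1 ≠ p.2) (Δ : ℕ)
    (hΔ : ∀ v : V, G.countP (fun p => p.1 = v ∨ p.2 = v) ≤ Δ) :
    (∑ σ : V ≃ Fin (Fintype.card V), ∑ v : V,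
          Real.sqrt (G.countP
            (fun p => (p.1 = v ∧ σ p.2 < σ v) ∨ (p.2 = v ∧ σ p.1 < σ v))))
        / (Fintype.card V).factorial
      ≥ (1 / 2) * ∑ v : V, Real.sqrt (G.countP (fun p => p.1 = v ∨ p.2 = v))
    ∧ (1 / 2) * ∑ v : V, Real.sqrt (G.countP (fun p => p.1 = v ∨ p.2 = v))
      ≥ (Multiset.card G : ℝ) / (2 * Real.sqrt Δ) := by
  change (∑ σ : V ≃ Fin (Fintype.card V), ∑ v, √(Multigraph.degreeBelow G σ v)) / _
      ≥ 1 / 2 * ∑ v, √(Multigraph.degree G v)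
    ∧ 1 / 2 * ∑ v, √(Multigraph.degree G v) ≥ _
  have hfact : (0 : ℝ) < (Fintype.card V).factorial := by positivity
  have hsum := Multigraph.factorial_mul_sum_sqrt_degree_le hloop
  have hcard := Multigraph.two_mul_card_div_sqrt_le_sum_sqrt_degree hloop hΔ
  refine ⟨?_, ?_⟩
  · rw [ge_iff_le, le_div_iff₀ hfact]
    linarith
  · have : (0 : ℝ) ≤ 2 * Multiset.card G / √Δ := by positivity
    calc (Multiset.card G : ℝ) / (2 * √Δ) = 1 / 4 * (2 * Multiset.card G / √Δ) := by ring
      _ ≤ 1 / 2 * (2 * Multiset.card G / √Δ) := by linarith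
      _ ≤ 1 / 2 * ∑ v, √(Multigraph.degree G v) := by gcongr
end
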